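/- arXiv:2506.05290 — 3 statements merged into one kernel-verified Lean document; each statement's English description precedes it below -/
import Mathlib

section
/- Let ε > 0, n ∈ ℕ, p = (1/2)e^{-ε/2}. Define V⁰ = B + Z and V¹ = 1 + n - B + Z where B ~ Binomial(n, p) and Z ~ Lap(1/ε), independent. Then for any N ≥ n + 1, ln(P(V¹ ≥ N) / P(V⁰ ≥ N)) = ε + n·ε', where ε' = ln((p + (1-p)e^{ε}) / (p·e^{ε} + 1 - p)) > 0. -/
/-! Since `N ≥ n + 1`, every Laplace tail in both sums is evaluated at a nonnegative point, where
`P(Z ≥ z) = e^{-εz}/2`.  Each sum is then a binomial generating function: the numerator is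
`e^{-ε(N-1-n)}/2 · (p e^{-ε} + 1 - p)^n` and the denominator `e^{-εN}/2 · (p e^ε + 1 - p)^n`, so the
ratio is `e^ε · ((p + (1-p) e^ε) / (p e^ε + 1 - p))^n`.  Positivity of `ε'` is
`(p + (1-p) e^ε) - (p e^ε + 1 - p) = (1 - 2p)(e^ε - 1) > 0`. -/

open MeasureTheory Real

/-- `P(B = k)` for `B ~ Binomial(n, p)`. -/
noncomputable def binomProb (n k : ℕ) (p : ℝ) : ℝ :=
  (n.choose k : ℝ) * p ^ k * (1 - p) ^ (n - k)

/-- Tail probability `P(Z ≥ z)` of a Laplace random variable with scale `1/ε`. -/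
noncomputable def lapTail (ε z : ℝ) : ℝ :=
  ∫ x in Set.Ici z, (ε / 2) * Real.exp (-ε * |x|)

open Finset

lemma lapTail_of_nonneg {ε z : ℝ} (hε : 0 < ε) (hz : 0 ≤ z) :
    lapTail ε z = exp (-ε * z) / 2 := by
  have h_abs : ∫ x in Set.Ioi z, ε / 2 * exp (-ε * |x|) = ∫ x in Set.Ioi z, ε / 2 * exp (-ε * x) :=
    setIntegral_congr_fun measurableSet_Ioi fun x hx => by
      rw [abs_of_nonneg (hz.trans hx.le)]
  rw [lapTail, integral_Ici_eq_integral_Ioi, h_abs, integral_const_mul,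
    integral_exp_mul_Ioi (neg_lt_zero.2 hε)]
  field_simp

lemma sum_binomProb_mul_pow (n : ℕ) (p a : ℝ) :
    ∑ k ∈ range (n + 1), binomProb n k p * a ^ k = (p * a + (1 - p)) ^ n := by
  rw [add_pow]
  refine sum_congr rfl fun k _ => ?_
  simp only [binomProb, mul_pow]
  ring

lemma sum_binomProb_mul_lapTail {ε : ℝ} (hε : 0 < ε) (n : ℕ) (p c s : ℝ)
    (hz : ∀ k ≤ n, 0 ≤ c + s * k) :
    ∑ k ∈ range (n + 1), binomProb n k p * lapTail ε (c + s * k)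
      = exp (-ε * c) / 2 * (p * exp (-ε * s) + (1 - p)) ^ n := by
  rw [← sum_binomProb_mul_pow, mul_sum]
  refine sum_congr rfl fun k hk => ?_
  rw [lapTail_of_nonneg hε (hz k (Nat.lt_succ_iff.1 (mem_range.1 hk))), ← exp_nat_mul,
    show -ε * (c + s * k) = -ε * c + k * (-ε * s) by ring, exp_add]
  ring

lemma tail_ratio_eq {ε : ℝ} (hε : 0 < ε) (n : ℕ) {p : ℝ} (hp : 0 ≤ p)
    {N : ℝ} (hN : (n : ℝ) + 1 ≤ N) :
    (∑ k ∈ range (n + 1), binomProb n k p * lapTail ε (N - 1 - n + k)) /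
        (∑ k ∈ range (n + 1), binomProb n k p * lapTail ε (N - k))
      = exp ε * ((p + (1 - p) * exp ε) / (p * exp ε + 1 - p)) ^ n := by
  have hnum := sum_binomProb_mul_lapTail hε n p (N - 1 - n) 1 fun k _ => by linarith
  have hden := sum_binomProb_mul_lapTail hε n p N (-1) fun k hk => by
    have : (k : ℝ) ≤ n := by exact_mod_cast hk
    linarith
  simp only [one_mul, mul_one, neg_one_mul, ← sub_eq_add_neg, mul_neg, neg_neg] at hnum hden
  have hb : 1 ≤ exp ε := one_le_exp hε.le
  have h_pos : 0 < p * exp ε + 1 - p := by nlinarith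
  have h_shift : exp ε ^ n * (p * (exp ε)⁻¹ + (1 - p)) ^ n = (p + (1 - p) * exp ε) ^ n := by
    rw [← mul_pow]
    field_simp
  rw [hnum, hden, exp_neg, show -ε * (N - 1 - n) = -ε * N + ε + n * ε by ring, exp_add, exp_add,
    exp_nat_mul, div_pow, ← h_shift]
  field_simp
  ring

/-- `V⁰ = B + Z ≥ N` iff `Z ≥ N - B`, and `V¹ = 1 + n - B + Z ≥ N` iff `Z ≥ N - 1 - n + B`. -/
theorem log_ratio_eq_eps_plus_n_eps' (ε : ℝ) (hε : 0 < ε) (n : ℕ)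
    (p : ℝ) (hp : p = (1/2) * Real.exp (-ε / 2))
    (N : ℝ) (hN : (n : ℝ) + 1 ≤ N)
    (ε' : ℝ)
    (hε' : ε' = Real.log ((p + (1 - p) * Real.exp ε) / (p * Real.exp ε + 1 - p))) :
    0 < ε' ∧
    Real.log
        ((∑ k ∈ Finset.range (n + 1), binomProb n k p * lapTail ε (N - 1 - n + k)) /
         (∑ k ∈ Finset.range (n + 1), binomProb n k p * lapTail ε (N - k)))
      = ε + n * ε' := by
  have hp0 : 0 < p := by rw [hp]; positivity
  have hp1 : p < 1 / 2 := by
    rw [hp]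
    have : exp (-ε / 2) < 1 := exp_lt_one_iff.2 (by linarith)
    linarith
  have hb : 1 < exp ε := one_lt_exp_iff.2 hε
  have h_den : 0 < p * exp ε + 1 - p := by nlinarith
  have h_ratio : 1 < (p + (1 - p) * exp ε) / (p * exp ε + 1 - p) := by
    rw [one_lt_div h_den]
    nlinarith
  refine ⟨hε' ▸ log_pos h_ratio, ?_⟩
  rw [tail_ratio_eq hε n hp0.le hN, log_mul (exp_pos ε).ne'
    (pow_pos (by linarith) n).ne', log_exp, log_pow, hε']
end

section
/- Let ε > 0, n ∈ ℕ, p = (1/2)e^{-ε/2}, and let B ~ Binomial(n, p). Suppose P(B > n/2) > 0 and n ≥ (4 ln 2)/(1 - e^{-ε/2})². Then for any ε₀ with 0 < ε₀ < ε, e^{ε - ε₀} · P(n - B > n/2) / P(B > n/2) ≥ e^{ε - ε₀} · exp(n·(1/2 - p)²). -/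
/-!
Write `c = (1/2 - p)²` and `q = 1 - p`. On the event `B ≥ n/2` every term `p^k q^(n-k)`
is at most `(pq)^(n/2)`, so `P(B ≥ n/2) ≤ (4pq)^(n/2) = (1 - 4c)^(n/2) ≤ exp(-2nc) = α⁻²`
with `α = exp(nc)`, and `P(n - B > n/2) = 1 - P(B ≥ n/2) ≥ 1 - α⁻²`. The hypothesis on `n`
says `nc ≥ log 2`, i.e. `α ≥ 2`, so the ratio is at least `α² - 1 ≥ α`.
-/

open Real

open Finset

lemma pow_mul_pow_sub_le_sqrt_pow {p q : ℝ} (hp : 0 ≤ p) (hpq : p ≤ q) {n k : ℕ}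
    (hkn : k ≤ n) (hnk : n ≤ 2 * k) : p ^ k * q ^ (n - k) ≤ √((p * q) ^ n) := by
  obtain ⟨m, rfl⟩ := Nat.exists_eq_add_of_le hkn
  obtain ⟨d, rfl⟩ := Nat.exists_eq_add_of_le (show m ≤ k by omega)
  rw [Nat.add_sub_cancel_left]
  have hq : 0 ≤ q := hp.trans hpq
  apply le_sqrt_of_sq_le
  calc (p ^ (m + d) * q ^ m) ^ 2 = p ^ (2 * m + d) * q ^ (2 * m) * p ^ d := by ring
    _ ≤ p ^ (2 * m + d) * q ^ (2 * m) * q ^ d := by gcongr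
    _ = (p * q) ^ (m + d + m) := by ring

lemma four_mul_mul_one_sub_le_exp (p : ℝ) : 4 * p * (1 - p) ≤ exp (-(4 * (1 / 2 - p) ^ 2)) := by
  linarith [add_one_le_exp (-(4 * (1 / 2 - p) ^ 2))]

section Binomial

variable (n : ℕ)

lemma sum_binomProb (p : ℝ) : ∑ k ∈ range (n + 1), binomProb n k p = 1 := by
  have h := add_pow p (1 - p) n
  rw [add_sub_cancel, one_pow] at h
  rw [h]
  exact sum_congr rfl fun k _ => by unfold binomProb; ring

lemma sum_binomProb_of_half_le_le_exp {p : ℝ} (hp₀ : 0 ≤ p) (hp : p ≤ 1 / 2)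
    (P : ℕ → Prop) [DecidablePred P] (hP : ∀ k, P k → (n : ℝ) / 2 ≤ k) :
    ∑ k ∈ range (n + 1), (if P k then binomProb n k p else 0)
      ≤ exp (-(2 * n * (1 / 2 - p) ^ 2)) := by
  calc ∑ k ∈ range (n + 1), (if P k then binomProb n k p else 0)
      ≤ ∑ k ∈ range (n + 1), (n.choose k : ℝ) * √((p * (1 - p)) ^ n) := by
        refine sum_le_sum fun k hk => ?_
        split_ifs with hk'
        · rw [binomProb, mul_assoc]
          have hnk : n ≤ 2 * k := by exact_mod_cast (by linarith [hP k hk'] : (n : ℝ) ≤ 2 * k)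
          gcongr
          exact pow_mul_pow_sub_le_sqrt_pow hp₀ (by linarith)
            (Nat.lt_succ_iff.mp (mem_range.mp hk)) hnk
        · positivity
    _ = √((4 * p * (1 - p)) ^ n) := by
        rw [← sum_mul, ← Nat.cast_sum, Nat.sum_range_choose,
          show (4 * p * (1 - p)) ^ n = ((2 : ℝ) ^ n) ^ 2 * (p * (1 - p)) ^ n by
            rw [← pow_mul, mul_comm n 2, pow_mul, ← mul_pow]; ring,
          sqrt_mul (by positivity), sqrt_sq (by positivity)]
        push_cast; ring
    _ ≤ √(exp (-(4 * (1 / 2 - p) ^ 2)) ^ n) := by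
        have : 0 ≤ 4 * p * (1 - p) := by nlinarith
        gcongr
        exact four_mul_mul_one_sub_le_exp p
    _ = exp (-(2 * n * (1 / 2 - p) ^ 2)) := by
        rw [← exp_nat_mul, sqrt_eq_iff_mul_self_eq (exp_pos _).le (exp_pos _).le, ← exp_add]
        ring_nf

lemma one_sub_exp_le_sum_binomProb_half_lt_sub {p : ℝ} (hp₀ : 0 ≤ p) (hp : p ≤ 1 / 2) :
    1 - exp (-(2 * n * (1 / 2 - p) ^ 2))
      ≤ ∑ k ∈ range (n + 1), (if (n : ℝ) / 2 < n - k then binomProb n k p else 0) := by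
  have hsplit : (∑ k ∈ range (n + 1), (if (n : ℝ) / 2 < n - k then binomProb n k p else 0))
      + ∑ k ∈ range (n + 1), (if (n : ℝ) / 2 ≤ k then binomProb n k p else 0) = 1 := by
    rw [← sum_add_distrib, ← sum_binomProb n p]
    refine sum_congr rfl fun k _ => ?_
    by_cases h : (n : ℝ) / 2 ≤ k
    · rw [if_neg (by linarith), if_pos h, zero_add]
    · rw [if_pos (by linarith), if_neg h, add_zero]
  linarith [sum_binomProb_of_half_le_le_exp n hp₀ hp (fun k => (n : ℝ) / 2 ≤ k) fun _ => id]

end Binomial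

lemma exp_le_div_of_le_exp_neg_two_mul {t a b : ℝ} (ht : log 2 ≤ t) (ha : 0 < a)
    (hat : a ≤ exp (-(2 * t))) (hbt : 1 - exp (-(2 * t)) ≤ b) : exp t ≤ b / a := by
  set u := exp (-t) with hu
  have hu₀ : 0 < u := exp_pos _
  have hu₁ : u ≤ 1 / 2 := by
    calc exp (-t) ≤ exp (-log 2) := exp_le_exp.mpr (by linarith)
      _ = 1 / 2 := by rw [exp_neg, exp_log two_pos, one_div]
  have hsq : exp (-(2 * t)) = u ^ 2 := by rw [hu, ← exp_nat_mul]; push_cast; ring_nf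
  rw [hsq] at hat hbt
  rw [le_div_iff₀ ha, show exp t = u⁻¹ by rw [hu, exp_neg, inv_inv]]
  calc u⁻¹ * a ≤ u⁻¹ * u ^ 2 := by gcongr
    _ = u := by field_simp
    _ ≤ 1 - u ^ 2 := by nlinarith
    _ ≤ b := hbt

theorem ratio_lower_bound_general (ε : ℝ) (hε : 0 < ε) (n : ℕ)
    (p : ℝ) (hp : p = (1/2) * Real.exp (-ε / 2))
    (hn : (4 * Real.log 2) / (1 - Real.exp (-ε / 2)) ^ 2 ≤ (n : ℝ))
    (hpos : 0 < ∑ k ∈ Finset.range (n + 1),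
        if (n : ℝ) / 2 < (k : ℝ) then binomProb n k p else 0)
    (ε₀ : ℝ) :
    Real.exp (ε - ε₀) * Real.exp ((n : ℝ) * (1/2 - p) ^ 2)
      ≤ Real.exp (ε - ε₀) *
          ((∑ k ∈ Finset.range (n + 1),
              if (n : ℝ) / 2 < (n : ℝ) - (k : ℝ) then binomProb n k p else 0) /
           (∑ k ∈ Finset.range (n + 1),
              if (n : ℝ) / 2 < (k : ℝ) then binomProb n k p else 0)) := by
  have hp₀ : 0 ≤ p := by rw [hp]; positivity
  have hp_half : p < 1 / 2 := by
    have : exp (-ε / 2) < 1 := exp_lt_one_iff.mpr (by linarith)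
    linarith
  have hlog : log 2 ≤ n * (1 / 2 - p) ^ 2 := by
    rw [show 1 - exp (-ε / 2) = 2 * (1 / 2 - p) by rw [hp]; ring,
      div_le_iff₀ (by nlinarith)] at hn
    linarith
  gcongr
  refine exp_le_div_of_le_exp_neg_two_mul hlog hpos ?_ ?_
  · rw [← mul_assoc]
    exact sum_binomProb_of_half_le_le_exp n hp₀ hp_half.le _ fun _ => le_of_lt
  · rw [← mul_assoc]
    exact one_sub_exp_le_sum_binomProb_half_lt_sub n hp₀ hp_half.le

theorem ratio_lower_bound (ε : ℝ) (hε : 0 < ε) (n : ℕ)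
    (p : ℝ) (hp : p = (1/2) * Real.exp (-ε / 2))
    (hn : (4 * Real.log 2) / (1 - Real.exp (-ε / 2)) ^ 2 ≤ (n : ℝ))
    (hpos : 0 < ∑ k ∈ Finset.range (n + 1),
        if (n : ℝ) / 2 < (k : ℝ) then binomProb n k p else 0)
    (ε₀ : ℝ) (hε₀ : 0 < ε₀) (hε₀ε : ε₀ < ε) :
    Real.exp (ε - ε₀) * Real.exp ((n : ℝ) * (1/2 - p) ^ 2)
      ≤ Real.exp (ε - ε₀) *
          ((∑ k ∈ Finset.range (n + 1),
              if (n : ℝ) / 2 < (n : ℝ) - (k : ℝ) then binomProb n k p else 0) /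
           (∑ k ∈ Finset.range (n + 1),
              if (n : ℝ) / 2 < (k : ℝ) then binomProb n k p else 0)) :=
  ratio_lower_bound_general ε hε n p hp hn hpos ε₀
end

section
/- Let a be a scalar attribution function with maximum attributable value a^max, and let S₁, …, S_n ⊆ I be pairwise disjoint support sets with one-hot encodings H₁, …, H_n. For inputs F, F' (tuples of k event sets), we have Σ_{i=1}^{n} ‖A_{a,S_i,H_i}(F) - A_{a,S_i,H_i}(F')‖₁ ≤ 2·a^max, where A_{a,S,H}(F) = Σ_j Σ_{f ∈ F_j ∩ S} a_F(f)·H(f). -/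
/-!
Each histogram `A_{a,Sᵢ,Hᵢ}(F)` has L1 norm at most the attributed mass of `F` on `Sᵢ`, since the
`Hᵢ f` have unit L1 norm. The supports are disjoint, so summing over `i` counts every event of `F`
at most once: the reports of `F` carry total L1 mass at most `a^max`, and likewise for `F'`. The
triangle inequality gives `2·a^max`.
-/

open Finset Function

theorem sum_abs_sum_le_sum_sum_abs {α β : Type*} (s : Finset α) (t : Finset β) (u : α → β → ℝ) :
    ∑ c ∈ t, |∑ x ∈ s, u x c| ≤ ∑ x ∈ s, ∑ c ∈ t, |u x c| :=
  (sum_le_sum fun _ _ => abs_sum_le_sum_abs _ s).trans_eq sum_comm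

theorem sum_abs_sum_mul_le_sum {α γ : Type*} [Fintype γ] (s : Finset α) (w : α → ℝ)
    (hw : ∀ x ∈ s, 0 ≤ w x) (v : α → γ → ℝ) (hv : ∀ x ∈ s, ∑ c, |v x c| ≤ 1) :
    ∑ c, |∑ x ∈ s, w x * v x c| ≤ ∑ x ∈ s, w x :=
  calc ∑ c, |∑ x ∈ s, w x * v x c|
      ≤ ∑ x ∈ s, ∑ c, |w x * v x c| := sum_abs_sum_le_sum_sum_abs _ _ _
    _ = ∑ x ∈ s, w x * ∑ c, |v x c| := by
        refine sum_congr rfl fun x hx => ?_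
        simp only [abs_mul, abs_of_nonneg (hw x hx), mul_sum]
    _ ≤ ∑ x ∈ s, w x := sum_le_sum fun x hx => mul_le_of_le_one_right (hw x hx) (hv x hx)

theorem sum_sum_inter_le_sum {ι α : Type*} [Fintype ι] [DecidableEq α] (S : ι → Finset α)
    (hS : Pairwise (Disjoint on S)) (T : Finset α) (g : α → ℝ) (hg : ∀ x ∈ T, 0 ≤ g x) :
    ∑ i, ∑ x ∈ T ∩ S i, g x ≤ ∑ x ∈ T, g x := by
  have hdisj : ((univ : Finset ι) : Set ι).PairwiseDisjoint fun i => T ∩ S i :=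
    fun _ _ _ _ hii' => (hS hii').mono inter_subset_right inter_subset_right
  rw [← sum_biUnion hdisj]
  exact sum_le_sum_of_subset_of_nonneg (biUnion_subset.2 fun _ _ => inter_subset_left)
    fun x hx _ => hg x hx

theorem sum_histogram_norm_le_attributed_mass {ι κ α : Type*} [Fintype ι] [Fintype κ]
    [DecidableEq α] {γ : ι → Type*} [∀ i, Fintype (γ i)] (S : ι → Finset α)
    (hS : Pairwise (Disjoint on S)) (H : (i : ι) → α → γ i → ℝ)
    (hH : ∀ i f, ∑ c, |H i f c| ≤ 1) (F : κ → Finset α) (w : α → ℝ) (hw : ∀ f, 0 ≤ w f) :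
    ∑ i, ∑ c, |∑ j, ∑ f ∈ F j ∩ S i, w f * H i f c| ≤ ∑ j, ∑ f ∈ F j, w f :=
  calc ∑ i, ∑ c, |∑ j, ∑ f ∈ F j ∩ S i, w f * H i f c|
      ≤ ∑ i, ∑ j, ∑ c, |∑ f ∈ F j ∩ S i, w f * H i f c| :=
        sum_le_sum fun _ _ => sum_abs_sum_le_sum_sum_abs _ _ _
    _ ≤ ∑ i, ∑ j, ∑ f ∈ F j ∩ S i, w f :=
        sum_le_sum fun i _ => sum_le_sum fun _ _ =>
          sum_abs_sum_mul_le_sum _ _ (fun f _ => hw f) _ fun f _ => hH i f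
    _ = ∑ j, ∑ i, ∑ f ∈ F j ∩ S i, w f := sum_comm
    _ ≤ ∑ j, ∑ f ∈ F j, w f :=
        sum_le_sum fun _ _ => sum_sum_inter_le_sum S hS _ _ fun f _ => hw f

theorem correlated_histogram_sensitivity_general {I : Type*} [DecidableEq I]
    (k n : ℕ) (m : Fin n → ℕ)
    (a : (Fin k → Finset I) → I → ℝ) (ha : ∀ F f, 0 ≤ a F f)
    (amax : ℝ) (hamax : ∀ F : Fin k → Finset I, (∑ j, ∑ f ∈ F j, a F f) ≤ amax)
    (S : Fin n → Finset I)
    (hdisj : ∀ i i', i ≠ i' → Disjoint (S i) (S i'))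
    (H : (i : Fin n) → I → Fin (m i) → ℝ)
    (hH : ∀ i f, ∑ c, |H i f c| = 1)
    (F F' : Fin k → Finset I) :
    ∑ i, ∑ c,
        |(∑ j, ∑ f ∈ (F j ∩ S i), a F f * H i f c) -
          (∑ j, ∑ f ∈ (F' j ∩ S i), a F' f * H i f c)|
      ≤ 2 * amax := by
  have hmass (G : Fin k → Finset I) :
      ∑ i, ∑ c, |∑ j, ∑ f ∈ G j ∩ S i, a G f * H i f c| ≤ amax :=
    (sum_histogram_norm_le_attributed_mass S hdisj H (fun i f => (hH i f).le)
      G (a G) (ha G)).trans (hamax G)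
  calc _ ≤ ∑ i, ∑ c, (|∑ j, ∑ f ∈ F j ∩ S i, a F f * H i f c| +
          |∑ j, ∑ f ∈ F' j ∩ S i, a F' f * H i f c|) :=
        sum_le_sum fun i _ => sum_le_sum fun c _ => abs_sub _ _
    _ = (∑ i, ∑ c, |∑ j, ∑ f ∈ F j ∩ S i, a F f * H i f c|) +
          ∑ i, ∑ c, |∑ j, ∑ f ∈ F' j ∩ S i, a F' f * H i f c| := by
        simp only [sum_add_distrib]
    _ ≤ 2 * amax := by linarith [hmass F, hmass F']

/-- Correlated histogram sensitivity: for pairwise disjoint support sets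
`S₁, …, Sₙ`, the total L1 change across the corresponding histogram reports is
bounded by `2·a^max`. -/
theorem correlated_histogram_sensitivity {I : Type*} [DecidableEq I]
    (k n : ℕ) (m : Fin n → ℕ)
    (a : (Fin k → Finset I) → I → ℝ) (ha : ∀ F f, 0 ≤ a F f)
    (amax : ℝ) (hamax : ∀ F : Fin k → Finset I, (∑ j, ∑ f ∈ F j, a F f) ≤ amax)
    (S : Fin n → Finset I)
    (hdisj : ∀ i i', i ≠ i' → Disjoint (S i) (S i'))
    (H : (i : Fin n) → I → Fin (m i) → ℝ)
    (hH01 : ∀ i f c, H i f c = 0 ∨ H i f c = 1)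
    (hH : ∀ i f, ∑ c, |H i f c| = 1)
    (F F' : Fin k → Finset I) :
    ∑ i, ∑ c,
        |(∑ j, ∑ f ∈ (F j ∩ S i), a F f * H i f c) -
          (∑ j, ∑ f ∈ (F' j ∩ S i), a F' f * H i f c)|
      ≤ 2 * amax :=
  correlated_histogram_sensitivity_general k n m a ha amax hamax S hdisj H hH F F'
end
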